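/- Let X be an M×N real matrix, σ > 0, λ > 0, and H a positive integer. Consider the (unnormalized) posterior density of the model in which U: M×H and V: N×H have independent Normal(0, σ²/λ) entries and X = U Vᵀ + E with E having independent Normal(0, σ²) entries, namely π(U,V) = exp( −(1/(2σ²)) ( ‖X − U Vᵀ‖_F² + λ‖U‖_F² + λ‖V‖_F² ) ). If (Û, V̂) is a global maximizer of π over all pairs (U: M×H, V: N×H), then Ŝ = Û V̂ᵀ attains the minimum of ‖X − S‖_F² + 2λ‖S‖_* over all M×N matrices S with rank(S) ≤ H. -/

import Mathlib

open Matrix BigOperators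

/-- The singular values of a real `M × N` matrix, sorted in decreasing order and
indexed by `Fin N` (the square roots of the eigenvalues of `XᵀX`). -/
noncomputable def svalAux {M N : ℕ} (X : Matrix (Fin M) (Fin N) ℝ) : Fin N → ℝ :=
  fun r => Real.sqrt
    (((Matrix.isHermitian_conjTranspose_mul_self X).eigenvalues ∘
      Tuple.sort ((Matrix.isHermitian_conjTranspose_mul_self X).eigenvalues)) r.rev)

/-- The `r`-th singular value (0-indexed, decreasing) of a real matrix, `0` if `r ≥ N`. -/
noncomputable def sval {M N : ℕ} (X : Matrix (Fin M) (Fin N) ℝ) (r : ℕ) : ℝ :=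
  if h : r < N then svalAux X ⟨r, h⟩ else 0

/-- Squared Frobenius norm. -/
noncomputable def frobSq {M N : ℕ} (X : Matrix (Fin M) (Fin N) ℝ) : ℝ :=
  ∑ i, ∑ j, (X i j) ^ 2

/-- Nuclear norm: sum of the singular values. -/
noncomputable def nucNorm {M N : ℕ} (X : Matrix (Fin M) (Fin N) ℝ) : ℝ :=
  ∑ r ∈ Finset.range (min M N), sval X r

/-!
For all `U`, `V` with `H` columns, `2 ‖U Vᵀ‖_* ≤ ‖U‖_F² + ‖V‖_F²`: with the singular value
decomposition `U Vᵀ = P Σ Qᵀ` one has `‖U Vᵀ‖_* = tr ((Uᵀ P)ᵀ (Vᵀ Q))`, which AM–GM bounds by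
`(‖Uᵀ P‖² + ‖Vᵀ Q‖²) / 2`, and `‖Uᵀ P‖ ≤ ‖U‖`, `‖Vᵀ Q‖ = ‖V‖` because `P` is a partial
isometry and `Q` is orthogonal. Equality is attained by `U = P Σ^{1/2} E`, `V = Q Σ^{1/2} E`,
where `E` embeds the support of `Σ` into `H` columns, which is possible exactly when
`rank S ≤ H`. Hence the least value of the negative log-posterior over the factorizations
`S = U Vᵀ` is `‖X - S‖_F² + 2λ‖S‖_*`, and a maximizer of the posterior minimizes it.
-/

section Frobenius

variable {m n k : ℕ}

theorem frobSq_eq_trace_transpose_mul (A : Matrix (Fin m) (Fin n) ℝ) :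
    frobSq A = trace (Aᵀ * A) := by
  simp only [frobSq, trace, diag, mul_apply, transpose_apply, sq]
  exact Finset.sum_comm

theorem frobSq_transpose (A : Matrix (Fin m) (Fin n) ℝ) : frobSq Aᵀ = frobSq A := by
  simp only [frobSq, transpose_apply]
  exact Finset.sum_comm

theorem frobSq_eq_trace_mul_transpose (A : Matrix (Fin m) (Fin n) ℝ) :
    frobSq A = trace (A * Aᵀ) := by
  rw [← frobSq_transpose, frobSq_eq_trace_transpose_mul, transpose_transpose]

theorem frobSq_nonneg (A : Matrix (Fin m) (Fin n) ℝ) : 0 ≤ frobSq A := by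
  unfold frobSq
  positivity

theorem frobSq_mul_of_transpose_mul_self_eq_one {Q : Matrix (Fin m) (Fin n) ℝ}
    (hQ : Qᵀ * Q = 1) (A : Matrix (Fin n) (Fin k) ℝ) : frobSq (Q * A) = frobSq A := by
  rw [frobSq_eq_trace_transpose_mul, frobSq_eq_trace_transpose_mul, transpose_mul,
    Matrix.mul_assoc, ← Matrix.mul_assoc Qᵀ, hQ, Matrix.one_mul]

theorem two_mul_trace_transpose_mul_le (A B : Matrix (Fin m) (Fin n) ℝ) :
    2 * trace (Aᵀ * B) ≤ frobSq A + frobSq B := by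
  have h := frobSq_nonneg (A - B)
  have hBA : trace (Bᵀ * A) = trace (Aᵀ * B) := by
    rw [← trace_transpose, transpose_mul, transpose_transpose]
  rw [frobSq_eq_trace_transpose_mul, transpose_sub, Matrix.sub_mul, Matrix.mul_sub,
    Matrix.mul_sub, trace_sub, trace_sub, trace_sub, hBA] at h
  rw [frobSq_eq_trace_transpose_mul, frobSq_eq_trace_transpose_mul]
  linarith

-- `P` is a partial isometry, so `P Pᵀ` is an orthogonal projection.
theorem frobSq_mul_le_of_mul_transpose_mul_self {P : Matrix (Fin n) (Fin k) ℝ}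
    (hP : P * (Pᵀ * P) = P) (A : Matrix (Fin m) (Fin n) ℝ) : frobSq (A * P) ≤ frobSq A := by
  have hG : P * Pᵀ * (P * Pᵀ) = P * Pᵀ := by
    rw [Matrix.mul_assoc, ← Matrix.mul_assoc Pᵀ, ← Matrix.mul_assoc, hP]
  have hR : (1 - P * Pᵀ) * (1 - P * Pᵀ)ᵀ = 1 - P * Pᵀ := by
    rw [transpose_sub, transpose_one, transpose_mul, transpose_transpose, Matrix.sub_mul,
      Matrix.mul_sub, Matrix.mul_sub, hG]
    simp
  calc frobSq (A * P) ≤ frobSq (A * P) + frobSq (A * (1 - P * Pᵀ)) :=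
        le_add_of_nonneg_right (frobSq_nonneg _)
    _ = frobSq A := by
      rw [frobSq_eq_trace_mul_transpose (A * P), frobSq_eq_trace_mul_transpose (A * _),
        frobSq_eq_trace_mul_transpose A, transpose_mul, transpose_mul, Matrix.mul_assoc,
        Matrix.mul_assoc A, ← Matrix.mul_assoc (1 - _), hR, Matrix.sub_mul, Matrix.one_mul,
        Matrix.mul_sub, trace_sub, Matrix.mul_assoc P]
      ring

end Frobenius

section SingularValueDecomposition

variable {M N : ℕ} (S : Matrix (Fin M) (Fin N) ℝ)

noncomputable def gramEigenvalues : Fin N → ℝ :=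
  (isHermitian_conjTranspose_mul_self S).eigenvalues

noncomputable def unsortedSingularValues : Fin N → ℝ :=
  fun i => √(gramEigenvalues S i)

noncomputable def rightSingularVectors : Matrix (Fin N) (Fin N) ℝ :=
  ((isHermitian_conjTranspose_mul_self S).eigenvectorUnitary : Matrix (Fin N) (Fin N) ℝ)

-- Columns with zero singular value vanish (`0⁻¹ = 0`), so `Pᵀ P` is a 0/1 diagonal, not `1`.
noncomputable def leftSingularVectors : Matrix (Fin M) (Fin N) ℝ :=
  S * rightSingularVectors S * diagonal (fun i => (unsortedSingularValues S i)⁻¹)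

theorem gramEigenvalues_nonneg (i : Fin N) : 0 ≤ gramEigenvalues S i :=
  (posSemidef_conjTranspose_mul_self S).eigenvalues_nonneg i

theorem unsortedSingularValues_mul_self (i : Fin N) :
    unsortedSingularValues S i * unsortedSingularValues S i = gramEigenvalues S i :=
  Real.mul_self_sqrt (gramEigenvalues_nonneg S i)

theorem unsortedSingularValues_eq_zero_iff (i : Fin N) :
    unsortedSingularValues S i = 0 ↔ gramEigenvalues S i = 0 :=
  Real.sqrt_eq_zero (gramEigenvalues_nonneg S i)

theorem rightSingularVectors_transpose_mul_self :
    (rightSingularVectors S)ᵀ * rightSingularVectors S = 1 := by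
  simpa [rightSingularVectors, star_eq_conjTranspose] using (mem_unitaryGroup_iff').mp
    (isHermitian_conjTranspose_mul_self S).eigenvectorUnitary.2

theorem rightSingularVectors_mul_transpose_self :
    rightSingularVectors S * (rightSingularVectors S)ᵀ = 1 := by
  simpa [rightSingularVectors, star_eq_conjTranspose] using (mem_unitaryGroup_iff).mp
    (isHermitian_conjTranspose_mul_self S).eigenvectorUnitary.2

theorem gram_mul_rightSingularVectors :
    (S * rightSingularVectors S)ᵀ * (S * rightSingularVectors S) =
      diagonal (gramEigenvalues S) := by
  have h := (isHermitian_conjTranspose_mul_self S).conjStarAlgAut_star_eigenvectorUnitary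
  simp only [Unitary.conjStarAlgAut_star_apply, star_eq_conjTranspose,
    conjTranspose_eq_transpose_of_trivial, RCLike.ofReal_real_eq_id, Function.id_comp] at h
  rw [transpose_mul, Matrix.mul_assoc, ← Matrix.mul_assoc Sᵀ, ← Matrix.mul_assoc]
  exact h

theorem mul_rightSingularVectors_apply_eq_zero {i : Fin N} (hi : gramEigenvalues S i = 0)
    (j : Fin M) : (S * rightSingularVectors S) j i = 0 := by
  have hdiag := congrFun (congrFun (gram_mul_rightSingularVectors S) i) i
  simp only [mul_apply, transpose_apply, diagonal_apply_eq, hi] at hdiag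
  exact mul_self_eq_zero.mp ((Finset.sum_eq_zero_iff_of_nonneg
    fun j _ => mul_self_nonneg _).mp hdiag j (Finset.mem_univ j))

theorem mul_rightSingularVectors_eq :
    S * rightSingularVectors S = leftSingularVectors S * diagonal (unsortedSingularValues S) := by
  ext j i
  rw [leftSingularVectors, Matrix.mul_assoc, diagonal_mul_diagonal, mul_diagonal]
  by_cases hi : gramEigenvalues S i = 0
  · simp [mul_rightSingularVectors_apply_eq_zero S hi]
  · simp [(unsortedSingularValues_eq_zero_iff S i).not.mpr hi]

theorem eq_leftSingularVectors_mul_diagonal_mul :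
    S = leftSingularVectors S * diagonal (unsortedSingularValues S) *
      (rightSingularVectors S)ᵀ := by
  rw [← mul_rightSingularVectors_eq, Matrix.mul_assoc, rightSingularVectors_mul_transpose_self,
    Matrix.mul_one]

theorem leftSingularVectors_transpose_mul :
    (leftSingularVectors S)ᵀ * (S * rightSingularVectors S) =
      diagonal (unsortedSingularValues S) := by
  rw [leftSingularVectors, transpose_mul, diagonal_transpose, Matrix.mul_assoc,
    gram_mul_rightSingularVectors, diagonal_mul_diagonal,
    ← funext (unsortedSingularValues_mul_self S)]
  simp [← mul_assoc]

theorem leftSingularVectors_mul_transpose_mul_self :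
    leftSingularVectors S * ((leftSingularVectors S)ᵀ * leftSingularVectors S) =
      leftSingularVectors S := by
  have hPtP : (leftSingularVectors S)ᵀ * leftSingularVectors S =
      diagonal (fun i => unsortedSingularValues S i * (unsortedSingularValues S i)⁻¹) := by
    calc (leftSingularVectors S)ᵀ * leftSingularVectors S
        = (leftSingularVectors S)ᵀ * (S * rightSingularVectors S) *
            diagonal (fun i => (unsortedSingularValues S i)⁻¹) := by
          rw [Matrix.mul_assoc]
          rfl
      _ = _ := by rw [leftSingularVectors_transpose_mul, diagonal_mul_diagonal]
  rw [hPtP, leftSingularVectors, Matrix.mul_assoc, diagonal_mul_diagonal]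
  congr 2
  funext i
  by_cases h : unsortedSingularValues S i = 0 <;> simp [h]

end SingularValueDecomposition

theorem Antitone.eq_zero_of_card_ne_zero_le {α : Type*} [PartialOrder α] [Zero α]
    [DecidableEq α] {n r : ℕ} {f : Fin n → α} (hf : Antitone f) (h0 : ∀ i, 0 ≤ f i)
    (hr : Fintype.card {i // f i ≠ 0} ≤ r) {j : Fin n} (hj : r ≤ j) : f j = 0 := by
  by_contra hne
  have hsub : Finset.Iic j ⊆ Finset.univ.filter (fun i => f i ≠ 0) := fun i hi =>
    Finset.mem_filter.mpr ⟨Finset.mem_univ _,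
      fun h => hne (le_antisymm ((hf (Finset.mem_Iic.mp hi)).trans_eq h) (h0 j))⟩
  have := Finset.card_le_card hsub
  rw [Fin.card_Iic, ← Fintype.card_subtype] at this
  omega

section NuclearNorm

variable {M N : ℕ} (S : Matrix (Fin M) (Fin N) ℝ)

theorem card_unsortedSingularValues_ne_zero :
    Fintype.card {i // unsortedSingularValues S i ≠ 0} = S.rank := by
  rw [← rank_transpose_mul_self, ← conjTranspose_eq_transpose_of_trivial,
    (isHermitian_conjTranspose_mul_self S).rank_eq_card_non_zero_eigs]
  exact Fintype.card_congr
    (Equiv.subtypeEquivRight fun i => (unsortedSingularValues_eq_zero_iff S i).not)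

theorem sval_eq_zero_of_rank_le {r : ℕ} (hr : S.rank ≤ r) : sval S r = 0 := by
  unfold sval
  split_ifs with h
  · refine Antitone.eq_zero_of_card_ne_zero_le (r := S.rank)
      (fun i j hij => Real.sqrt_le_sqrt (Tuple.monotone_sort _ (Fin.rev_anti hij)))
      (fun _ => Real.sqrt_nonneg _) ?_ hr
    rw [← card_unsortedSingularValues_ne_zero]
    exact (Fintype.card_congr (Equiv.subtypeEquiv (q := fun i => unsortedSingularValues S i ≠ 0)
      (Fin.revPerm.trans (Tuple.sort (gramEigenvalues S))) fun i => Iff.rfl)).le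
  · rfl

theorem nucNorm_eq_sum_unsortedSingularValues :
    nucNorm S = ∑ i, unsortedSingularValues S i := by
  have hrank : S.rank ≤ min M N :=
    le_min (by simpa using S.rank_le_card_height) (by simpa using S.rank_le_card_width)
  calc nucNorm S = ∑ r ∈ Finset.range N, sval S r :=
        Finset.sum_subset (Finset.range_subset_range.mpr (min_le_right M N)) fun r _ hr =>
          sval_eq_zero_of_rank_le S
            (hrank.trans (by simpa only [Finset.mem_range, not_lt] using hr))
    _ = ∑ i : Fin N, svalAux S i := by
        rw [← Fin.sum_univ_eq_sum_range]
        simp [sval]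
    _ = ∑ i, unsortedSingularValues S i :=
        Equiv.sum_comp (Fin.revPerm.trans (Tuple.sort (gramEigenvalues S)))
          (unsortedSingularValues S)

end NuclearNorm

theorem Matrix.exists_mul_transpose_eq_diagonal {ι κ : Type*} [Fintype ι] [Fintype κ]
    [DecidableEq ι] [DecidableEq κ] (d : ι → ℝ) (hd : ∀ i, 0 ≤ d i)
    (hcard : Fintype.card {i // d i ≠ 0} ≤ Fintype.card κ) :
    ∃ F : Matrix ι κ ℝ, F * Fᵀ = diagonal d := by
  obtain ⟨e⟩ := Function.Embedding.nonempty_of_card_le hcard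
  let A : Matrix ι {i // d i ≠ 0} ℝ := of fun i t => if (t : ι) = i then √(d i) else 0
  let B : Matrix {i // d i ≠ 0} κ ℝ := (1 : Matrix κ κ ℝ).submatrix e id
  have hB : B * Bᵀ = 1 := by
    rw [transpose_submatrix, transpose_one, ← submatrix_mul _ _ _ _ _ Function.bijective_id,
      Matrix.one_mul, submatrix_one_embedding]
  refine ⟨A * B, ?_⟩
  rw [transpose_mul, Matrix.mul_assoc, ← Matrix.mul_assoc B, hB, Matrix.one_mul]
  ext i j
  simp only [A, mul_apply, transpose_apply, of_apply, diagonal_apply]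
  split_ifs with hij
  · subst hij
    by_cases hi : d i = 0
    · simp [hi]
    · rw [Fintype.sum_eq_single ⟨i, hi⟩ fun t ht => by simp [Subtype.ext_iff.not.mp ht]]
      simp [Real.mul_self_sqrt (hd i)]
  · refine Finset.sum_eq_zero fun t _ => ?_
    split_ifs with hi hj <;> simp_all

theorem two_mul_nucNorm_mul_transpose_le {M N H : ℕ} (U : Matrix (Fin M) (Fin H) ℝ)
    (V : Matrix (Fin N) (Fin H) ℝ) : 2 * nucNorm (U * Vᵀ) ≤ frobSq U + frobSq V := by
  set S := U * Vᵀ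
  set P := leftSingularVectors S
  set Q := rightSingularVectors S
  have htrace : nucNorm S = trace ((Uᵀ * P)ᵀ * (Vᵀ * Q)) := by
    rw [nucNorm_eq_sum_unsortedSingularValues, ← trace_diagonal,
      ← leftSingularVectors_transpose_mul, transpose_mul, transpose_transpose]
    simp only [S, P, Q, Matrix.mul_assoc]
  have hU : frobSq (Uᵀ * P) ≤ frobSq U :=
    (frobSq_mul_le_of_mul_transpose_mul_self (leftSingularVectors_mul_transpose_mul_self S)
      Uᵀ).trans_eq (frobSq_transpose U)
  have hV : frobSq (Vᵀ * Q) = frobSq V := by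
    rw [← frobSq_transpose, transpose_mul, transpose_transpose,
      frobSq_mul_of_transpose_mul_self_eq_one (by
        rw [transpose_transpose]
        exact rightSingularVectors_mul_transpose_self S)]
  calc 2 * nucNorm S = 2 * trace ((Uᵀ * P)ᵀ * (Vᵀ * Q)) := by rw [htrace]
    _ ≤ frobSq (Uᵀ * P) + frobSq (Vᵀ * Q) := two_mul_trace_transpose_mul_le _ _
    _ ≤ frobSq U + frobSq V := by linarith

theorem exists_mul_transpose_eq_frobSq_eq_nucNorm {M N H : ℕ} (S : Matrix (Fin M) (Fin N) ℝ)
    (h : S.rank ≤ H) : ∃ (U : Matrix (Fin M) (Fin H) ℝ) (V : Matrix (Fin N) (Fin H) ℝ),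
      U * Vᵀ = S ∧ frobSq U = nucNorm S ∧ frobSq V = nucNorm S := by
  obtain ⟨F, hF⟩ := exists_mul_transpose_eq_diagonal (κ := Fin H) (unsortedSingularValues S)
    (fun _ => Real.sqrt_nonneg _)
    (by rwa [card_unsortedSingularValues_ne_zero, Fintype.card_fin])
  have hnuc : trace (diagonal (unsortedSingularValues S)) = nucNorm S := by
    rw [trace_diagonal, nucNorm_eq_sum_unsortedSingularValues]
  refine ⟨leftSingularVectors S * F, rightSingularVectors S * F, ?_, ?_, ?_⟩
  · rw [transpose_mul, Matrix.mul_assoc, ← Matrix.mul_assoc F, hF, ← Matrix.mul_assoc,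
      ← eq_leftSingularVectors_mul_diagonal_mul]
  · rw [frobSq_eq_trace_mul_transpose, transpose_mul, Matrix.mul_assoc, ← Matrix.mul_assoc F, hF,
      ← Matrix.mul_assoc, trace_mul_comm, ← mul_rightSingularVectors_eq,
      leftSingularVectors_transpose_mul, hnuc]
  · rw [frobSq_mul_of_transpose_mul_self_eq_one (rightSingularVectors_transpose_mul_self S),
      frobSq_eq_trace_mul_transpose, hF, hnuc]

theorem statement4_general {M N : ℕ} (X : Matrix (Fin M) (Fin N) ℝ)
    (σ lam : ℝ) (hσ : 0 < σ) (hlam : 0 < lam) (H : ℕ)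
    (Uh : Matrix (Fin M) (Fin H) ℝ) (Vh : Matrix (Fin N) (Fin H) ℝ)
    (hmax : ∀ (U : Matrix (Fin M) (Fin H) ℝ) (V : Matrix (Fin N) (Fin H) ℝ),
      Real.exp (-(1 / (2 * σ ^ 2)) *
          (frobSq (X - U * Vᵀ) + lam * frobSq U + lam * frobSq V))
        ≤ Real.exp (-(1 / (2 * σ ^ 2)) *
          (frobSq (X - Uh * Vhᵀ) + lam * frobSq Uh + lam * frobSq Vh))) :
    (Uh * Vhᵀ).rank ≤ H ∧
      ∀ S : Matrix (Fin M) (Fin N) ℝ, S.rank ≤ H →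
        frobSq (X - Uh * Vhᵀ) + 2 * lam * nucNorm (Uh * Vhᵀ)
          ≤ frobSq (X - S) + 2 * lam * nucNorm S := by
  have hobj : ∀ (U : Matrix (Fin M) (Fin H) ℝ) (V : Matrix (Fin N) (Fin H) ℝ),
      frobSq (X - Uh * Vhᵀ) + lam * frobSq Uh + lam * frobSq Vh
        ≤ frobSq (X - U * Vᵀ) + lam * frobSq U + lam * frobSq V := fun U V =>
    (mul_le_mul_left_of_neg (neg_neg_of_pos (by positivity))).mp
      (Real.exp_le_exp.mp (hmax U V))
  refine ⟨(rank_mul_le_left Uh Vhᵀ).trans (by simpa using Uh.rank_le_card_width),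
    fun S hS => ?_⟩
  obtain ⟨U, V, rfl, hU, hV⟩ := exists_mul_transpose_eq_frobSq_eq_nucNorm S hS
  have hmin := hobj U V
  rw [hU, hV] at hmin
  have hpenalty := mul_le_mul_of_nonneg_left (two_mul_nucNorm_mul_transpose_le Uh Vh) hlam.le
  linarith

/-- **Corollary 1.** If `(Uh, Vh)` globally maximizes the (unnormalized) posterior density
of the Gaussian factor model, then `Uh * Vhᵀ` minimizes the nuclear-norm penalized least
squares objective over matrices of rank at most `H`. -/
theorem statement4 {M N : ℕ} (X : Matrix (Fin M) (Fin N) ℝ)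
    (σ lam : ℝ) (hσ : 0 < σ) (hlam : 0 < lam) (H : ℕ) (hH : 0 < H)
    (Uh : Matrix (Fin M) (Fin H) ℝ) (Vh : Matrix (Fin N) (Fin H) ℝ)
    (hmax : ∀ (U : Matrix (Fin M) (Fin H) ℝ) (V : Matrix (Fin N) (Fin H) ℝ),
      Real.exp (-(1 / (2 * σ ^ 2)) *
          (frobSq (X - U * Vᵀ) + lam * frobSq U + lam * frobSq V))
        ≤ Real.exp (-(1 / (2 * σ ^ 2)) *
          (frobSq (X - Uh * Vhᵀ) + lam * frobSq Uh + lam * frobSq Vh))) :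
    (Uh * Vhᵀ).rank ≤ H ∧
      ∀ S : Matrix (Fin M) (Fin N) ℝ, S.rank ≤ H →
        frobSq (X - Uh * Vhᵀ) + 2 * lam * nucNorm (Uh * Vhᵀ)
          ≤ frobSq (X - S) + 2 * lam * nucNorm S :=
  statement4_general X σ lam hσ hlam H Uh Vh hmax
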